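/- Singular values and expansion coefficient of a unital trace-preserving channel versus its Kraus rank: let D, d ≥ 1 and let Φ be the CP map on D×D complex matrices with Kraus operators K : Fin d → Matrix (Fin D) (Fin D) ℂ, assumed unital and trace-preserving (∑_a (K a) * (K a)ᴴ = 1 and ∑_a (K a)ᴴ * (K a) = 1). Let T = ∑_a (K a) ⊗ₖ ((K a).map star) be its matrix representation, and let κ ≥ 0 satisfy ‖Φ(X) − (trace X / D) • 1‖_F ≤ κ · ‖X‖_F for all D×D matrices X, where ‖M‖_F = Real.sqrt((trace(Mᴴ * M)).re). Then 1/d ≤ (trace(Tᴴ * T)).re / D² ≤ 1/D² + κ²; in particular κ² ≥ 1/d − 1/D². -/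

import Mathlib

/-!
Write `Φ(X) = ∑ₐ Kₐ X Kₐᴴ` and `‖·‖` for the Frobenius norm; `‖T‖²` is computed in two ways.
Pairing Kraus operators, `‖T‖² = ∑_{a,b} |tr(Kₐᴴ K_b)|² ≥ ∑ₐ (tr Kₐᴴ Kₐ)² ≥ D²/d` by
Cauchy–Schwarz, because trace preservation gives `∑ₐ tr(Kₐᴴ Kₐ) = D`.
Column by column, `‖T‖² = ∑_{k,l} ‖Φ(E_kl)‖²` for the matrix units `E_kl`. Since `Φ` preserves
traces, splitting `Φ(E_kl)` into its scalar part `(tr E_kl / D) • 1` and an orthogonal traceless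
part gives `‖Φ(E_kl)‖² = |tr E_kl|² / D + ‖Φ(E_kl) - (tr E_kl / D) • 1‖² ≤ δ_kl / D + κ²`, and
summing over `k, l` gives `‖T‖² ≤ 1 + D² κ²`.
-/

open Matrix
open scoped Kronecker

/-- The matrix representation `T = ∑ a, K a ⊗ₖ (K a).map star`. -/
noncomputable def transferMatrix {D d : ℕ} (K : Fin d → Matrix (Fin D) (Fin D) ℂ) :
    Matrix (Fin D × Fin D) (Fin D × Fin D) ℂ :=
  ∑ a, K a ⊗ₖ (K a).map star

/-- The Frobenius (Hilbert–Schmidt) norm of a complex matrix. -/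
noncomputable def frobNorm {n : Type*} [Fintype n] [DecidableEq n]
    (M : Matrix n n ℂ) : ℝ :=
  Real.sqrt (((Mᴴ * M).trace).re)

section Frobenius

variable {m n : Type*} [Fintype m] [Fintype n]

lemma re_trace_conjTranspose_mul_self (M : Matrix m n ℂ) :
    ((Mᴴ * M).trace).re = ∑ j, ∑ i, Complex.normSq (M i j) := by
  simp [Matrix.trace, Matrix.mul_apply, conjTranspose_apply, Complex.normSq_apply]

lemma re_trace_kronecker_map_star (A B : Matrix n n ℂ) :
    (((A ⊗ₖ A.map star)ᴴ * (B ⊗ₖ B.map star)).trace).re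
      = Complex.normSq (Aᴴ * B).trace := by
  have hmap : (A.map star)ᴴ * B.map star = (Aᴴ * B).map star := by
    ext i j
    simp [mul_apply]
  have htr : ((Aᴴ * B).map star).trace = star (Aᴴ * B).trace := by
    rw [← trace_conjTranspose, ← trace_transpose]; rfl
  rw [conjTranspose_kronecker, ← mul_kronecker_mul, hmap, trace_kronecker, htr,
    Complex.star_def, Complex.mul_conj, Complex.ofReal_re]

variable [DecidableEq n]

lemma frobNorm_sq (M : Matrix n n ℂ) : frobNorm M ^ 2 = ((Mᴴ * M).trace).re := by
  refine Real.sq_sqrt ?_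
  rw [re_trace_conjTranspose_mul_self]
  exact Finset.sum_nonneg fun _ _ => Finset.sum_nonneg fun _ _ => Complex.normSq_nonneg _

lemma frobNorm_nonneg (M : Matrix n n ℂ) : 0 ≤ frobNorm M := Real.sqrt_nonneg _

lemma frobNorm_single_one (k l : n) : frobNorm (single k l (1 : ℂ)) = 1 := by
  rw [frobNorm, re_trace_conjTranspose_mul_self]
  simp [Matrix.single, ite_and, apply_ite Complex.normSq]

lemma frobNorm_sq_smul_one_add (c : ℂ) {N : Matrix n n ℂ} (hN : N.trace = 0) :
    frobNorm (c • 1 + N) ^ 2 = Complex.normSq c * Fintype.card n + frobNorm N ^ 2 := by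
  have hNH : Nᴴ.trace = 0 := by rw [trace_conjTranspose, hN, star_zero]
  rw [frobNorm_sq, frobNorm_sq]
  simp [add_mul, mul_add, trace_add, hN, hNH, ← mul_assoc, Complex.mul_conj]

lemma frobNorm_sq_eq_normSq_trace_div_add [Nonempty n] (M : Matrix n n ℂ) :
    frobNorm M ^ 2 = Complex.normSq M.trace / Fintype.card n
      + frobNorm (M - (M.trace / Fintype.card n) • 1) ^ 2 := by
  have hn : (Fintype.card n : ℂ) ≠ 0 := Nat.cast_ne_zero.mpr Fintype.card_ne_zero
  set c := M.trace / Fintype.card n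
  have htr : (M - c • 1).trace = 0 := by simp [c, div_mul_cancel₀ _ hn]
  have hc : M.trace = c * Fintype.card n := by simp [c, div_mul_cancel₀ _ hn]
  conv_lhs => rw [← add_sub_cancel (c • (1 : Matrix n n ℂ)) M]
  rw [frobNorm_sq_smul_one_add c htr, hc, Complex.normSq_mul, Complex.normSq_natCast]
  field_simp

end Frobenius

section Kraus

variable {ι n : Type*} [Fintype ι] [Fintype n] [DecidableEq n]

def krausMap (K : ι → Matrix n n ℂ) (X : Matrix n n ℂ) : Matrix n n ℂ :=
  ∑ a, K a * X * (K a)ᴴ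

lemma trace_krausMap {K : ι → Matrix n n ℂ} (htp : ∑ a, (K a)ᴴ * K a = 1)
    (X : Matrix n n ℂ) : (krausMap K X).trace = X.trace := by
  calc (krausMap K X).trace = ∑ a, ((K a)ᴴ * K a * X).trace := by
        rw [krausMap, Matrix.trace_sum]
        refine Finset.sum_congr rfl fun a _ => ?_
        rw [Matrix.trace_mul_cycle, Matrix.mul_assoc]
    _ = X.trace := by rw [← Matrix.trace_sum, ← Matrix.sum_mul, htp, Matrix.one_mul]

end Kraus

section TransferMatrix

variable {D d : ℕ} (K : Fin d → Matrix (Fin D) (Fin D) ℂ)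

lemma re_trace_transferMatrix_eq_sum_normSq :
    (((transferMatrix K)ᴴ * transferMatrix K).trace).re
      = ∑ a, ∑ b, Complex.normSq ((K a)ᴴ * K b).trace := by
  simp only [transferMatrix, conjTranspose_sum, Finset.sum_mul_sum, trace_sum, Complex.re_sum,
    re_trace_kronecker_map_star]

lemma transferMatrix_apply (i j k l : Fin D) :
    transferMatrix K (i, j) (k, l) = krausMap K (single k l 1) i j := by
  simp only [transferMatrix, krausMap, Matrix.sum_apply, kroneckerMap_apply, map_apply, mul_apply,
    conjTranspose_apply, single_apply]
  refine Finset.sum_congr rfl fun a _ => ?_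
  simp [ite_and]

lemma re_trace_transferMatrix_eq_sum_frobNorm_sq :
    (((transferMatrix K)ᴴ * transferMatrix K).trace).re
      = ∑ k, ∑ l, frobNorm (krausMap K (single k l 1)) ^ 2 := by
  simp only [re_trace_conjTranspose_mul_self, frobNorm_sq, Fintype.sum_prod_type,
    transferMatrix_apply]
  exact Finset.sum_congr rfl fun k _ => Finset.sum_congr rfl fun l _ => Finset.sum_comm

lemma sq_le_card_mul_re_trace_transferMatrix (htp : ∑ a, (K a)ᴴ * K a = 1) :
    (D : ℝ) ^ 2 ≤ d * (((transferMatrix K)ᴴ * transferMatrix K).trace).re := by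
  set x : Fin d → ℝ := fun a => (((K a)ᴴ * K a).trace).re
  have hsum : ∑ a, x a = D := by
    simpa [x, trace_sum] using congrArg (fun M => M.trace.re) htp
  have hdiag : ∑ a, x a ^ 2 ≤ (((transferMatrix K)ᴴ * transferMatrix K).trace).re := by
    rw [re_trace_transferMatrix_eq_sum_normSq]
    refine Finset.sum_le_sum fun a _ => (sq (x a) ▸ Complex.re_sq_le_normSq _).trans ?_
    exact Finset.single_le_sum (f := fun b => Complex.normSq ((K a)ᴴ * K b).trace)
      (fun b _ => Complex.normSq_nonneg _) (Finset.mem_univ a)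
  calc (D : ℝ) ^ 2 = (∑ a, x a) ^ 2 := by rw [hsum]
    _ ≤ d * ∑ a, x a ^ 2 := by simpa using sq_sum_le_card_mul_sum_sq (s := Finset.univ) (f := x)
    _ ≤ _ := by gcongr

lemma re_trace_transferMatrix_le_one_add [NeZero D] (htp : ∑ a, (K a)ᴴ * K a = 1) {κ : ℝ}
    (hexp : ∀ X, frobNorm (krausMap K X - (X.trace / D) • 1) ≤ κ * frobNorm X) :
    (((transferMatrix K)ᴴ * transferMatrix K).trace).re ≤ 1 + D ^ 2 * κ ^ 2 := by
  have hcol (k l : Fin D) : frobNorm (krausMap K (single k l 1)) ^ 2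
      ≤ Complex.normSq (single k l (1 : ℂ)).trace / D + κ ^ 2 := by
    have h := hexp (single k l 1)
    rw [frobNorm_single_one, mul_one] at h
    rw [frobNorm_sq_eq_normSq_trace_div_add, trace_krausMap htp, Fintype.card_fin]
    have := pow_le_pow_left₀ (frobNorm_nonneg _) h 2
    linarith
  have htrace : ∑ k : Fin D, ∑ l : Fin D, Complex.normSq (single k l (1 : ℂ)).trace / D = 1 := by
    have hdiag (k l : Fin D) :
        Complex.normSq (single k l (1 : ℂ)).trace = if k = l then 1 else 0 := by
      split_ifs with hkl <;> simp [hkl]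
    simp [hdiag, ite_div]
  calc (((transferMatrix K)ᴴ * transferMatrix K).trace).re
      = ∑ k, ∑ l, frobNorm (krausMap K (single k l 1)) ^ 2 :=
        re_trace_transferMatrix_eq_sum_frobNorm_sq K
    _ ≤ ∑ k : Fin D, ∑ l : Fin D, (Complex.normSq (single k l (1 : ℂ)).trace / D + κ ^ 2) := by
        gcongr with k _ l _; exact hcol k l
    _ = 1 + D ^ 2 * κ ^ 2 := by
        simp only [Finset.sum_add_distrib, htrace]; simp; ring

end TransferMatrix

theorem unital_channel_singular_values_expansion_bound_general
    (D d : ℕ) (hD : 1 ≤ D)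
    (K : Fin d → Matrix (Fin D) (Fin D) ℂ)
    (htp : ∑ a, (K a)ᴴ * K a = (1 : Matrix (Fin D) (Fin D) ℂ))
    (κ : ℝ)
    (hexp : ∀ X : Matrix (Fin D) (Fin D) ℂ,
      frobNorm ((∑ a, K a * X * (K a)ᴴ) -
          (X.trace / (D : ℂ)) • (1 : Matrix (Fin D) (Fin D) ℂ))
        ≤ κ * frobNorm X) :
    1 / (d : ℝ) ≤ (((transferMatrix K)ᴴ * transferMatrix K).trace).re / (D : ℝ) ^ 2 ∧
    (((transferMatrix K)ᴴ * transferMatrix K).trace).re / (D : ℝ) ^ 2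
        ≤ 1 / (D : ℝ) ^ 2 + κ ^ 2 ∧
    1 / (d : ℝ) - 1 / (D : ℝ) ^ 2 ≤ κ ^ 2 := by
  have : NeZero D := ⟨by omega⟩
  set t := (((transferMatrix K)ᴴ * transferMatrix K).trace).re
  have hD2 : (0 : ℝ) < D ^ 2 := by positivity
  have hlow : (D : ℝ) ^ 2 ≤ d * t := sq_le_card_mul_re_trace_transferMatrix K htp
  have hup : t ≤ 1 + D ^ 2 * κ ^ 2 := re_trace_transferMatrix_le_one_add K htp hexp
  have hd : (0 : ℝ) < d :=
    Nat.cast_pos.mpr (Nat.pos_of_ne_zero (by rintro rfl; simp at hlow; omega))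
  have hleft : 1 / (d : ℝ) ≤ t / D ^ 2 := by
    rw [div_le_div_iff₀ hd hD2]; linarith
  have hright : t / D ^ 2 ≤ 1 / D ^ 2 + κ ^ 2 := by
    rw [div_add' _ _ _ hD2.ne', div_le_div_iff_of_pos_right hD2]; linarith
  exact ⟨hleft, hright, by linarith⟩

/-- Singular values and expansion coefficient of a unital trace-preserving channel versus its
Kraus rank: `1/d ≤ (trace (Tᴴ T)).re / D² ≤ 1/D² + κ²`, and in particular
`κ² ≥ 1/d - 1/D²`. -/
theorem unital_channel_singular_values_expansion_bound
    (D d : ℕ) (hD : 1 ≤ D) (hd : 1 ≤ d)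
    (K : Fin d → Matrix (Fin D) (Fin D) ℂ)
    (hunital : ∑ a, K a * (K a)ᴴ = (1 : Matrix (Fin D) (Fin D) ℂ))
    (htp : ∑ a, (K a)ᴴ * K a = (1 : Matrix (Fin D) (Fin D) ℂ))
    (κ : ℝ) (hκ : 0 ≤ κ)
    (hexp : ∀ X : Matrix (Fin D) (Fin D) ℂ,
      frobNorm ((∑ a, K a * X * (K a)ᴴ) -
          (X.trace / (D : ℂ)) • (1 : Matrix (Fin D) (Fin D) ℂ))
        ≤ κ * frobNorm X) :
    1 / (d : ℝ) ≤ (((transferMatrix K)ᴴ * transferMatrix K).trace).re / (D : ℝ) ^ 2 ∧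
    (((transferMatrix K)ᴴ * transferMatrix K).trace).re / (D : ℝ) ^ 2
        ≤ 1 / (D : ℝ) ^ 2 + κ ^ 2 ∧
    1 / (d : ℝ) - 1 / (D : ℝ) ^ 2 ≤ κ ^ 2 :=
  unital_channel_singular_values_expansion_bound_general D d hD K htp κ hexp
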